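/- Let g and h be binary morphisms A* → Σ*, and let g be marked. Let c and c' be elements of the equality set E(g,h) = {u : g(u) = h(u)} that are not prefix-comparable, and let u = c ∧ c' be their longest common prefix. Then g(u) = h(u)·z_h. -/

import Mathlib

/-- The two-letter alphabet `A = {a, b}`. -/
inductive Ltr : Type
  | a : Ltr
  | b : Ltr
  deriving DecidableEq

/-- Apply a morphism (given by the images of the letters) to a word. -/
def mapp {α σ : Type*} (g : α → List σ) (w : List α) : List σ :=
  (w.map g).flatten

/-- The `n`-th power `tⁿ` of a word `t`. -/
def npow {σ : Type*} (t : List σ) (n : ℕ) : List σ :=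
  (List.replicate n t).flatten

/-- A binary morphism is periodic if all images of letters are powers of a common word. -/
def Periodic {σ : Type*} (g : Ltr → List σ) : Prop :=
  ∃ t : List σ, ∀ x : Ltr, ∃ n : ℕ, g x = npow t n

/-- The equality set `E(g,h)`. -/
def EqSet {σ : Type*} (g h : Ltr → List σ) : Set (List Ltr) :=
  {u | mapp g u = mapp h u}

/-- `u` is a minimal element of `E(g,h)`: nonempty, in `E(g,h)`, and not a product of two
nonempty elements of `E(g,h)`. -/
def MinEl {σ : Type*} (g h : Ltr → List σ) (u : List Ltr) : Prop :=
  u ≠ [] ∧ u ∈ EqSet g h ∧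
    ∀ v w : List Ltr, v ≠ [] → w ≠ [] → v ∈ EqSet g h → w ∈ EqSet g h → u ≠ v ++ w

/-- The submonoid of the free monoid generated by a set `S` of words. -/
def gen {α : Type*} (S : Set (List α)) : Set (List α) :=
  {u | ∃ l : List (List α), (∀ v ∈ l, v ∈ S) ∧ u = l.flatten}

/-- A binary morphism is marked if the images of the two letters are nonempty and
begin with different letters. -/
def Marked {σ : Type*} (g : Ltr → List σ) : Prop :=
  g Ltr.a ≠ [] ∧ g Ltr.b ≠ [] ∧ (g Ltr.a).head? ≠ (g Ltr.b).head?

open Classical in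
/-- Longest common prefix of two words. -/
noncomputable def lcp {σ : Type*} : List σ → List σ → List σ
  | x :: xs, y :: ys => if x = y then x :: lcp xs ys else []
  | _, _ => []

/-- `z_h`: the longest common prefix of `h(ab)` and `h(ba)`. -/
noncomputable def zh {σ : Type*} (h : Ltr → List σ) : List σ :=
  lcp (h Ltr.a ++ h Ltr.b) (h Ltr.b ++ h Ltr.a)

/-- `z̄_h`: the longest common suffix of `h(ab)` and `h(ba)`. -/
noncomputable def zbar {σ : Type*} (h : Ltr → List σ) : List σ :=
  (lcp (h Ltr.a ++ h Ltr.b).reverse ((h Ltr.b ++ h Ltr.a).reverse)).reverse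

/-- Componentwise concatenation in `Δ* × Δ*`. -/
def pprod {α : Type*} (p q : List α × List α) : List α × List α :=
  (p.1 ++ q.1, p.2 ++ q.2)

/-- The coincidence set `I(g,h) = {(u,v) | g(u) = h(v)}`. -/
def CoinSet {α σ : Type*} (g h : α → List σ) : Set (List α × List α) :=
  {p | mapp g p.1 = mapp h p.2}

/-- Minimal elements of the coincidence set: elements other than `(ε,ε)` that are not
a product of two elements of `I(g,h) \ {(ε,ε)}`. -/
def MinCoin {α σ : Type*} (g h : α → List σ) (p : List α × List α) : Prop :=
  p ≠ ([], []) ∧ p ∈ CoinSet g h ∧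
    ¬ ∃ q r : List α × List α, q ≠ ([], []) ∧ r ≠ ([], []) ∧
      q ∈ CoinSet g h ∧ r ∈ CoinSet g h ∧ p = pprod q r

/-- `(e,f)` is a block of `(g,h)`: nonempty words with `z_h·g(e) = h(f)·z_h`, minimal
with this property. -/
def MinBlock {σ : Type*} (g h : Ltr → List σ) (e f : List Ltr) : Prop :=
  e ≠ [] ∧ f ≠ [] ∧ zh h ++ mapp g e = mapp h f ++ zh h ∧
    ∀ u v : List Ltr, u <+: e → v <+: f →
      zh h ++ mapp g u = mapp h v ++ zh h → (u = [] ∧ v = []) ∨ (u = e ∧ v = f)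

/-- `e` is a nonempty word with `z_h·g(e) = h(e)·z_h`, minimal with this property. -/
def MinEqBlock {σ : Type*} (g h : Ltr → List σ) (e : List Ltr) : Prop :=
  e ≠ [] ∧ zh h ++ mapp g e = mapp h e ++ zh h ∧
    ∀ e₁ : List Ltr, e₁ <+: e → zh h ++ mapp g e₁ = mapp h e₁ ++ zh h →
      e₁ = [] ∨ e₁ = e

/-- The binary morphism sending `a ↦ x` and `b ↦ y`. -/
def two {σ : Type*} (x y : List σ) : Ltr → List σ
  | Ltr.a => x
  | Ltr.b => y

/-- A counterexample: the minimal generating set of `E(g,h)` has at least two elements,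
`g` is marked, `h` is not marked, `|g(a)| > |h(a)|` and `|g(b)| < |h(b)|`. -/
def Counterexample {σ : Type*} (g h : Ltr → List σ) : Prop :=
  (∃ α β : List Ltr, MinEl g h α ∧ MinEl g h β ∧ α ≠ β) ∧
  Marked g ∧ ¬ Marked h ∧
  (h Ltr.a).length < (g Ltr.a).length ∧ (g Ltr.b).length < (h Ltr.b).length


/-! If `x` and `y` begin with different letters and `h(x)`, `h(y)` are not prefix-comparable,
then `h(x) ∧ h(y) = z_h`. This is clear when `h(a)` and `h(b)` are not prefix-comparable;
otherwise, say `h(b) = h(a) z` with `h(a) ≠ ε`, and `h` factors as `h' ∘ τ` with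
`τ : a ↦ a, b ↦ ab` and the shorter `h' : a ↦ h(a), b ↦ z`, while `z_h = h(a) z_{h'}`; so
induction on `|h(a)| + |h(b)|` applies. Splitting off common prefixes gives
`h(x) ∧ h(y) = h(x ∧ y) z_h` whenever `h(x)`, `h(y)` are not prefix-comparable. For
`c, c' ∈ E(g,h)` the marked `g` gives `g(c) ∧ g(c') = g(c ∧ c')`, and `g(c) = h(c)`,
`g(c') = h(c')`. -/

section LongestCommonPrefix

variable {α : Type*}

theorem lcp_nil_left (t : List α) : lcp [] t = [] := by cases t <;> rfl

theorem lcp_nil_right (s : List α) : lcp s [] = [] := by cases s <;> rfl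

theorem lcp_cons_cons_self (x : α) (s t : List α) : lcp (x :: s) (x :: t) = x :: lcp s t := by
  simp [lcp]

theorem lcp_cons_cons_of_ne {x y : α} (h : x ≠ y) (s t : List α) :
    lcp (x :: s) (y :: t) = [] := by
  simp [lcp, h]

theorem lcp_append_left (p s t : List α) : lcp (p ++ s) (p ++ t) = p ++ lcp s t := by
  induction p with
  | nil => rfl
  | cons x p ih => simp [lcp_cons_cons_self, ih]

theorem lcp_comm : ∀ s t : List α, lcp s t = lcp t s
  | [], t => by rw [lcp_nil_left, lcp_nil_right]
  | _ :: _, [] => by rw [lcp_nil_left, lcp_nil_right]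
  | x :: s, y :: t => by
    by_cases hxy : x = y
    · subst hxy
      rw [lcp_cons_cons_self, lcp_cons_cons_self, lcp_comm s t]
    · rw [lcp_cons_cons_of_ne hxy, lcp_cons_cons_of_ne (Ne.symm hxy)]

theorem exists_eq_lcp_append_cons :
    ∀ s t : List α, ¬(s <+: t ∨ t <+: s) →
      ∃ x s' y t', x ≠ y ∧ s = lcp s t ++ x :: s' ∧ t = lcp s t ++ y :: t'
  | [], t, hn => absurd (Or.inl t.nil_prefix) hn
  | _ :: _, [], hn => absurd (Or.inr List.nil_prefix) hn
  | x :: s, y :: t, hn => by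
    by_cases hxy : x = y
    · subst hxy
      obtain ⟨x', s', y', t', hne, hs, ht⟩ :=
        exists_eq_lcp_append_cons s t (by simpa [List.cons_prefix_cons] using hn)
      refine ⟨x', s', y', t', hne, ?_, ?_⟩ <;>
        rw [lcp_cons_cons_self, List.cons_append] <;> congr
    · exact ⟨x, s, y, t, hxy, by simp [lcp_cons_cons_of_ne hxy],
        by simp [lcp_cons_cons_of_ne hxy]⟩

theorem lcp_append_of_not_prefix {s t : List α} (hn : ¬(s <+: t ∨ t <+: s)) (p q : List α) :
    lcp (s ++ p) (t ++ q) = lcp s t := by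
  obtain ⟨x, s', y, t', hxy, hs, ht⟩ := exists_eq_lcp_append_cons s t hn
  set l := lcp s t
  rw [hs, ht, List.append_assoc, List.append_assoc, lcp_append_left, List.cons_append,
    List.cons_append, lcp_cons_cons_of_ne hxy, List.append_nil]

theorem prefix_or_prefix_of_append_comm {s t : List α} (h : s ++ t = t ++ s) :
    s <+: t ∨ t <+: s :=
  List.prefix_or_prefix_of_prefix (List.prefix_append s t) (h ▸ List.prefix_append t s)

end LongestCommonPrefix

section Morphism

variable {α σ : Type*}

theorem mapp_nil (g : α → List σ) : mapp g [] = [] := rfl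

theorem mapp_cons (g : α → List σ) (c : α) (w : List α) :
    mapp g (c :: w) = g c ++ mapp g w := by
  simp [mapp]

theorem mapp_append (g : α → List σ) (u v : List α) :
    mapp g (u ++ v) = mapp g u ++ mapp g v := by
  simp [mapp]

theorem mapp_append_comm {g : α → List σ} (hg : ∀ c d, g c ++ g d = g d ++ g c)
    (x y : List α) :
    mapp g x ++ mapp g y = mapp g y ++ mapp g x := by
  have hletter : ∀ (x : List α) d, mapp g x ++ g d = g d ++ mapp g x := by
    intro x d
    induction x with
    | nil => simp [mapp_nil]
    | cons c x ih => rw [mapp_cons, List.append_assoc, ih, ← List.append_assoc, hg,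
        List.append_assoc]
  induction y with
  | nil => simp [mapp_nil]
  | cons d y ih => rw [mapp_cons, ← List.append_assoc, hletter, List.append_assoc, ih,
      List.append_assoc]

end Morphism

theorem Ltr.eq_or_eq_of_ne {c d : Ltr} (hcd : c ≠ d) (e : Ltr) : e = c ∨ e = d := by
  cases c <;> cases d <;> cases e <;> simp_all

section BinaryMorphism

variable {σ : Type*}

theorem zh_eq_lcp (h : Ltr → List σ) {c d : Ltr} (hcd : c ≠ d) :
    zh h = lcp (h c ++ h d) (h d ++ h c) := by
  cases c <;> cases d <;> first | exact absurd rfl hcd | rfl | exact lcp_comm _ _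

theorem length_add_length_eq (h : Ltr → List σ) {c d : Ltr} (hcd : c ≠ d) :
    (h .a).length + (h .b).length = (h c).length + (h d).length := by
  cases c <;> cases d <;> first | exact absurd rfl hcd | rfl | exact Nat.add_comm _ _

theorem prefix_or_prefix_mapp_of_append_comm {h : Ltr → List σ} {c d : Ltr} (hcd : c ≠ d)
    (hcomm : h c ++ h d = h d ++ h c) (x y : List Ltr) :
    mapp h x <+: mapp h y ∨ mapp h y <+: mapp h x := by
  refine prefix_or_prefix_of_append_comm (mapp_append_comm (fun e f => ?_) x y)
  rcases Ltr.eq_or_eq_of_ne hcd e with rfl | rfl <;>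
    rcases Ltr.eq_or_eq_of_ne hcd f with rfl | rfl <;> simp [hcomm]

def elementaryMorphism (c e : Ltr) : List Ltr := if e = c then [c] else [c, e]

def residualMorphism (h : Ltr → List σ) (c : Ltr) (z : List σ) (e : Ltr) : List σ :=
  if e = c then h c else z

variable {h : Ltr → List σ} {c d : Ltr} {z : List σ}

theorem mapp_residualMorphism_elementaryMorphism (hcd : c ≠ d) (hz : h c ++ z = h d)
    (w : List Ltr) :
    mapp (residualMorphism h c z) (mapp (elementaryMorphism c) w) = mapp h w := by
  induction w with
  | nil => rfl
  | cons e w ih =>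
    rw [mapp_cons, mapp_append, ih, mapp_cons]
    rcases Ltr.eq_or_eq_of_ne hcd e with rfl | rfl
    · simp [elementaryMorphism, residualMorphism, mapp_cons, mapp_nil]
    · simp [elementaryMorphism, residualMorphism, mapp_cons, mapp_nil, hcd.symm, hz]

theorem lcp_mapp_elementaryMorphism_cons_cons (hcd : c ≠ d) (x y : List Ltr) :
    lcp (mapp (elementaryMorphism c) (c :: x)) (mapp (elementaryMorphism c) (d :: y)) = [c] := by
  simp only [mapp_cons, elementaryMorphism, if_pos, if_neg hcd.symm, List.cons_append,
    List.nil_append, lcp_cons_cons_self]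
  cases x with
  | nil => rw [mapp_nil, lcp_nil_left]
  | cons e x =>
    rw [mapp_cons, elementaryMorphism]
    split_ifs <;> simp [lcp_cons_cons_of_ne hcd]

theorem zh_eq_append_zh_residualMorphism (hcd : c ≠ d) (hz : h c ++ z = h d) :
    zh h = h c ++ zh (residualMorphism h c z) := by
  rw [zh_eq_lcp h hcd, zh_eq_lcp _ hcd, ← hz]
  simp [residualMorphism, hcd.symm, ← lcp_append_left]

theorem length_residualMorphism_lt (hcd : c ≠ d) (hz : h c ++ z = h d) (hc : h c ≠ []) :
    (residualMorphism h c z .a).length + (residualMorphism h c z .b).length <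
      (h .a).length + (h .b).length := by
  rw [length_add_length_eq _ hcd, length_add_length_eq _ hcd, ← hz]
  simp [residualMorphism, hcd.symm, List.length_pos_iff.mpr hc]

end BinaryMorphism

section LcpOfImages

variable {σ : Type*}

theorem lcp_mapp_of_lcp_mapp_cons_cons {h : Ltr → List σ}
    (H : ∀ c d x y, c ≠ d → ¬(mapp h (c :: x) <+: mapp h (d :: y) ∨
      mapp h (d :: y) <+: mapp h (c :: x)) → lcp (mapp h (c :: x)) (mapp h (d :: y)) = zh h)
    (x y : List Ltr) (hn : ¬(mapp h x <+: mapp h y ∨ mapp h y <+: mapp h x)) :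
    lcp (mapp h x) (mapp h y) = mapp h (lcp x y) ++ zh h := by
  have hxy : ¬(x <+: y ∨ y <+: x) := by
    rintro (⟨r, rfl⟩ | ⟨r, rfl⟩) <;> simp [mapp_append] at hn
  obtain ⟨c, x', d, y', hcd, hx, hy⟩ := exists_eq_lcp_append_cons x y hxy
  set u := lcp x y
  rw [hx, hy, mapp_append, mapp_append, List.prefix_append_right_inj,
    List.prefix_append_right_inj] at hn
  rw [hx, hy, mapp_append, mapp_append, lcp_append_left, H c d x' y' hcd hn]

theorem lcp_mapp_cons_cons_of_append_eq {h : Ltr → List σ} {c d : Ltr} {z : List σ}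
    (hcd : c ≠ d) (hz : h c ++ z = h d)
    (H : ∀ x y, ¬(mapp (residualMorphism h c z) x <+: mapp (residualMorphism h c z) y ∨
      mapp (residualMorphism h c z) y <+: mapp (residualMorphism h c z) x) →
      lcp (mapp (residualMorphism h c z) x) (mapp (residualMorphism h c z) y) =
        mapp (residualMorphism h c z) (lcp x y) ++ zh (residualMorphism h c z))
    (x y : List Ltr) (hn : ¬(mapp h (c :: x) <+: mapp h (d :: y) ∨
      mapp h (d :: y) <+: mapp h (c :: x))) :
    lcp (mapp h (c :: x)) (mapp h (d :: y)) = zh h := by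
  have hfac := mapp_residualMorphism_elementaryMorphism hcd hz
  rw [← hfac, ← hfac] at hn ⊢
  rw [H _ _ hn, lcp_mapp_elementaryMorphism_cons_cons hcd,
    zh_eq_append_zh_residualMorphism hcd hz]
  simp [mapp, residualMorphism]

theorem lcp_mapp (h : Ltr → List σ) (x y : List Ltr)
    (hn : ¬(mapp h x <+: mapp h y ∨ mapp h y <+: mapp h x)) :
    lcp (mapp h x) (mapp h y) = mapp h (lcp x y) ++ zh h := by
  refine lcp_mapp_of_lcp_mapp_cons_cons (fun c d x y hcd hn => ?_) x y hn
  by_cases hcomm : h c ++ h d = h d ++ h c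
  · exact absurd (prefix_or_prefix_mapp_of_append_comm hcd hcomm _ _) hn
  have hc : h c ≠ [] := by rintro hc; simp [hc] at hcomm
  have hd : h d ≠ [] := by rintro hd; simp [hd] at hcomm
  by_cases hcomp : h c <+: h d ∨ h d <+: h c
  · rcases hcomp with ⟨z, hz⟩ | ⟨z, hz⟩
    · exact lcp_mapp_cons_cons_of_append_eq hcd hz (lcp_mapp _) x y hn
    · rw [lcp_comm]
      exact lcp_mapp_cons_cons_of_append_eq hcd.symm hz (lcp_mapp _) y x (by rwa [or_comm])
  · rw [mapp_cons, mapp_cons, lcp_append_of_not_prefix hcomp, zh_eq_lcp h hcd,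
      lcp_append_of_not_prefix hcomp]
termination_by (h .a).length + (h .b).length
decreasing_by
  · exact length_residualMorphism_lt hcd hz hc
  · exact length_residualMorphism_lt hcd.symm hz hd

theorem Marked.exists_mapp_cons_cons {g : Ltr → List σ} (hg : Marked g) {c d : Ltr}
    (hcd : c ≠ d) (x y : List Ltr) :
    ∃ p s q t, p ≠ q ∧ mapp g (c :: x) = p :: s ∧ mapp g (d :: y) = q :: t := by
  obtain ⟨ha, hb, hab⟩ := hg
  obtain ⟨p, s, hs⟩ := List.exists_cons_of_ne_nil ha
  obtain ⟨q, t, ht⟩ := List.exists_cons_of_ne_nil hb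
  have hpq : p ≠ q := by simpa [hs, ht] using hab
  cases c <;> cases d <;> simp only [mapp_cons, hs, ht, List.cons_append] <;>
    first | exact absurd rfl hcd | exact ⟨_, _, _, _, hpq, rfl, rfl⟩ |
      exact ⟨_, _, _, _, hpq.symm, rfl, rfl⟩

end LcpOfImages

/-- If `c, c' ∈ E(g,h)` are not prefix-comparable, then
`g(c ∧ c') = h(c ∧ c')·z_h` (`g` marked). -/
theorem stmt_12 {σ : Type*} (g h : Ltr → List σ) (hg : Marked g)
    (c c' : List Ltr)
    (h1 : c ∈ EqSet g h) (h2 : c' ∈ EqSet g h)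
    (hinc : ¬ (c <+: c' ∨ c' <+: c)) :
    mapp g (lcp c c') = mapp h (lcp c c') ++ zh h := by
  change mapp g c = mapp h c at h1
  change mapp g c' = mapp h c' at h2
  obtain ⟨e, x, f, y, hef, hc, hc'⟩ := exists_eq_lcp_append_cons c c' hinc
  obtain ⟨p, s, q, t, hpq, hx, hy⟩ := hg.exists_mapp_cons_cons hef x y
  have hgc : mapp g c = mapp g (lcp c c') ++ p :: s := by rw [← hx, ← mapp_append, ← hc]
  have hgc' : mapp g c' = mapp g (lcp c c') ++ q :: t := by rw [← hy, ← mapp_append, ← hc']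
  have hn : ¬(mapp h c <+: mapp h c' ∨ mapp h c' <+: mapp h c) := by
    rw [← h1, ← h2, hgc, hgc', List.prefix_append_right_inj,
      List.prefix_append_right_inj]
    simp [List.cons_prefix_cons, hpq, hpq.symm]
  calc mapp g (lcp c c') = lcp (mapp g c) (mapp g c') := by
        rw [hgc, hgc', lcp_append_left, lcp_cons_cons_of_ne hpq, List.append_nil]
    _ = lcp (mapp h c) (mapp h c') := by rw [h1, h2]
    _ = mapp h (lcp c c') ++ zh h := lcp_mapp h c c' hn
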